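/- arXiv:2312.13690 — 8 statements merged into one kernel-verified Lean document; each statement's English description precedes it below -/
import Mathlib

section
/- If k is odd, then the sum of all edge intersection numbers is bounded below in terms of the dimension: 4·Σ_{1 ≤ α < β ≤ k} |M_α ∩ M_β| ≥ (k−1)²·d. -/
/-!
Let `n x` be the number of sets `M α` containing `x`. Double counting gives
`∑ n x = ∑ |M α| = k d` and `∑ (n x)² = 2 S + k d`, where `S` is the edge sum. For odd `k`
every `2 n x - k` is odd, so `∑ (2 n x - k)² ≥ |X| = 2 d`; expanding the square turns this
into `8 S ≥ 2 d (k - 1)²`.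
-/

open Finset

theorem two_mul_card_eq_card_of_mem_iff_apply_notMem {X : Type*} [Fintype X] [DecidableEq X]
    {σ : X → X} (hσ : Function.Involutive σ) {M : Finset X} (hM : ∀ x, x ∈ M ↔ σ x ∉ M) :
    2 * #M = Fintype.card X := by
  have hcompl : Mᶜ = M.image σ := by
    ext y
    rw [mem_compl, mem_image]
    constructor
    · intro hy
      exact ⟨σ y, (hM (σ y)).2 (by rwa [hσ y]), hσ y⟩
    · rintro ⟨x, hx, rfl⟩
      exact (hM x).1 hx
  have := card_compl_add_card M
  rw [hcompl, card_image_of_injective _ hσ.injective] at this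
  omega

theorem one_le_sq_two_mul_sub_of_odd {k : ℕ} (hk : Odd k) (n : ℕ) : 1 ≤ (2 * n - k : ℤ) ^ 2 := by
  have : (2 * n - k : ℤ) ≠ 0 := by obtain ⟨t, rfl⟩ := hk; omega
  exact (one_le_sq_iff_one_le_abs _).2 (Int.one_le_abs this)

theorem sum_sq_two_mul_sub {X : Type*} [Fintype X] (f : X → ℤ) (m : ℤ) :
    ∑ x, (2 * f x - m) ^ 2 = 4 * ∑ x, f x ^ 2 - 4 * m * ∑ x, f x + Fintype.card X * m ^ 2 := by
  have hterm : ∀ x, (2 * f x - m) ^ 2 = 4 * f x ^ 2 - 4 * m * f x + m ^ 2 := fun x => by ring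
  simp only [hterm, sum_add_distrib, sum_sub_distrib, ← mul_sum, sum_const, card_univ, nsmul_eq_mul]

section Cover
variable {ι X : Type*} [Fintype ι] [Fintype X] [DecidableEq X]

def coverCount (M : ι → Finset X) (x : X) : ℕ := #{α | x ∈ M α}

theorem sum_coverCount (M : ι → Finset X) : ∑ x, coverCount M x = ∑ α, #(M α) := by
  have := sum_card_bipartiteAbove_eq_sum_card_bipartiteBelow (fun x α => x ∈ M α)
    (s := univ) (t := univ)
  simpa only [coverCount, bipartiteAbove, bipartiteBelow, filter_univ_mem] using this

theorem sum_coverCount_sq_eq_sum_card_inter (M : ι → Finset X) :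
    ∑ x, coverCount M x ^ 2 = ∑ p : ι × ι, #(M p.1 ∩ M p.2) := by
  have := sum_card_bipartiteAbove_eq_sum_card_bipartiteBelow
    (fun x (p : ι × ι) => x ∈ M p.1 ∩ M p.2) (s := univ) (t := univ)
  simp only [bipartiteAbove, bipartiteBelow, filter_univ_mem] at this
  rw [← this]
  refine sum_congr rfl fun x _ => ?_
  rw [coverCount, sq, ← card_product, ← filter_product, univ_product_univ]
  simp only [mem_inter]

theorem sum_eq_two_nsmul_sum_lt_add_sum_diag {M : Type*} [AddCommMonoid M] [LinearOrder ι]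
    {f : ι → ι → M} (hf : ∀ a b, f a b = f b a) :
    ∑ p : ι × ι, f p.1 p.2 = 2 • ∑ p : ι × ι with p.1 < p.2, f p.1 p.2 + ∑ a, f a a := by
  have hsplit : ∀ p : ι × ι, f p.1 p.2 = (if p.1 < p.2 then f p.1 p.2 else 0)
      + (if p.2 < p.1 then f p.2 p.1 else 0) + if p.1 = p.2 then f p.1 p.2 else 0 := by
    rintro ⟨a, b⟩
    rcases lt_trichotomy a b with h | rfl | h
    · simp [h, h.not_gt, h.ne]
    · simp
    · simp [h, h.not_gt, h.ne', hf a b]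
  have hswap : ∑ p : ι × ι, (if p.2 < p.1 then f p.2 p.1 else 0)
      = ∑ p : ι × ι, if p.1 < p.2 then f p.1 p.2 else 0 :=
    Fintype.sum_equiv (Equiv.prodComm ι ι) _ _ fun _ => rfl
  rw [sum_congr rfl fun p _ => hsplit p, sum_add_distrib, sum_add_distrib, hswap, ← sum_filter,
    two_nsmul, Fintype.sum_prod_type]
  simp

theorem sum_coverCount_sq_eq_two_mul_sum_lt_add_sum_card [LinearOrder ι] (M : ι → Finset X) :
    ∑ x, coverCount M x ^ 2 = 2 * ∑ p : ι × ι with p.1 < p.2, #(M p.1 ∩ M p.2) + ∑ α, #(M α) := by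
  rw [sum_coverCount_sq_eq_sum_card_inter,
    sum_eq_two_nsmul_sum_lt_add_sum_diag (f := fun a b => #(M a ∩ M b)) fun a b => by rw [inter_comm],
    smul_eq_mul]
  simp only [inter_self]

theorem card_le_sum_sq_two_mul_coverCount_sub (hι : Odd (Fintype.card ι)) (M : ι → Finset X) :
    (Fintype.card X : ℤ) ≤ ∑ x, (2 * coverCount M x - Fintype.card ι : ℤ) ^ 2 := by
  simpa using sum_le_sum fun x (_ : x ∈ univ) => one_le_sq_two_mul_sub_of_odd hι (coverCount M x)

end Cover

theorem edge_sum_lower_bound_odd_general {X : Type*} [Fintype X] [DecidableEq X]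
    (d k : ℕ) (hodd : Odd k)
    (hX : Fintype.card X = 2 * d)
    (σ : X → X) (hσinv : ∀ x, σ (σ x) = x)
    (M : Fin k → Finset X)
    (hM : ∀ α, ∀ x : X, x ∈ M α ↔ σ x ∉ M α) :
    4 * ∑ p ∈ univ.filter (fun p : Fin k × Fin k => p.1 < p.2), (M p.1 ∩ M p.2).card
      ≥ (k - 1) ^ 2 * d := by
  set S := ∑ p ∈ univ.filter (fun p : Fin k × Fin k => p.1 < p.2), (M p.1 ∩ M p.2).card
  have hcard : ∀ α, #(M α) = d := fun α => by
    have := two_mul_card_eq_card_of_mem_iff_apply_notMem hσinv (hM α); omega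
  have hsum : ∑ x, (coverCount M x : ℤ) = k * d := by
    exact_mod_cast (sum_coverCount M).trans (by simp [hcard])
  have hsq : ∑ x, (coverCount M x : ℤ) ^ 2 = 2 * S + k * d := by
    exact_mod_cast (sum_coverCount_sq_eq_two_mul_sum_lt_add_sum_card M).trans (by simp [hcard, S])
  have key := card_le_sum_sq_two_mul_coverCount_sub (by simpa using hodd) M
  rw [sum_sq_two_mul_sub, hsum, hsq, Fintype.card_fin, hX] at key
  obtain ⟨t, rfl⟩ := hodd
  rw [Nat.add_sub_cancel, ge_iff_le]
  zify
  push_cast at key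
  linarith

/-- If `k` is odd, the sum of all edge intersection numbers is
bounded below: `4 * Σ_{α<β} |M α ∩ M β| ≥ (k-1)^2 * d`. -/
theorem edge_sum_lower_bound_odd {X : Type*} [Fintype X] [DecidableEq X]
    (d k : ℕ) (hd : 0 < d) (hk : 0 < k) (hodd : Odd k)
    (hX : Fintype.card X = 2 * d)
    (σ : X → X) (hσinv : ∀ x, σ (σ x) = x) (hσfpf : ∀ x, σ x ≠ x)
    (M : Fin k → Finset X)
    (hM : ∀ α, ∀ x : X, x ∈ M α ↔ σ x ∉ M α) :
    4 * ∑ p ∈ univ.filter (fun p : Fin k × Fin k => p.1 < p.2), (M p.1 ∩ M p.2).card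
      ≥ (k - 1) ^ 2 * d :=
  edge_sum_lower_bound_odd_general d k hodd hX σ hσinv M hM
end

section
/- Suppose k is odd with k ≥ 3, and suppose that for all 1 ≤ α < β ≤ k the edge intersection numbers satisfy |M_α ∩ M_β| ≤ d − 4 (as an inequality of integers). Then (k+1)·d ≥ 8k, equivalently k·(d−8) + d ≥ 0. -/
open Finset

/-! Encode each `M α` as its `±1` vector `v_α` on `X`. As `|M α| = d`, the Gram matrix is
`⟨v_α, v_β⟩ = 4 |M α ∩ M β| - 2d`: equal to `2d` on the diagonal and at most `2d - 16` off it.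
For odd `k` every entry of `∑ α, v_α` is odd, hence nonzero, so its squared norm is at least
`|X| = 2d`. Expanding that norm through the Gram matrix gives `2d ≤ 2dk + k(k-1)(2d-16)`, which
rearranges to `(k+1) d ≥ 8k` once `k ≥ 2`. -/

section

variable {ι X R : Type*}

theorem Int.odd_sum_iff_odd_card {s : Finset ι} {f : ι → ℤ} (hf : ∀ i ∈ s, Odd (f i)) :
    Odd (∑ i ∈ s, f i) ↔ Odd #s := by
  induction s using Finset.cons_induction with
  | empty => simp
  | cons a s ha ih =>
    rw [sum_cons, card_cons, Int.odd_add, ← Int.not_odd_iff_even,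
      ih fun i hi => hf i (mem_cons_of_mem hi), Nat.odd_add_one]
    simp [hf a (mem_cons_self a s)]

theorem Int.one_le_sq_of_odd {n : ℤ} (hn : Odd n) : 1 ≤ n ^ 2 :=
  (one_le_sq_iff_one_le_abs n).2 <| Int.one_le_abs <| by rintro rfl; simp at hn

theorem Finset.sum_sq_sum_eq_sum_sum_sum_mul [Fintype X] [CommSemiring R] (s : Finset ι)
    (v : ι → X → R) :
    ∑ x, (∑ i ∈ s, v i x) ^ 2 = ∑ i ∈ s, ∑ j ∈ s, ∑ x, v i x * v j x := by
  simp_rw [sq, sum_mul_sum]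
  rw [sum_comm]
  exact sum_congr rfl fun i _ => sum_comm

theorem Finset.sum_sum_le_of_diag_le_of_offDiag_le [Fintype ι] [DecidableEq ι] [AddCommMonoid R]
    [PartialOrder R] [IsOrderedAddMonoid R] (G : ι → ι → R) {a b : R} (hdiag : ∀ i, G i i ≤ a)
    (hoff : ∀ i j, i ≠ j → G i j ≤ b) :
    ∑ i, ∑ j, G i j ≤ Fintype.card ι • a + (Fintype.card ι * (Fintype.card ι - 1)) • b := by
  have hrow : ∀ i, ∑ j, G i j ≤ a + (Fintype.card ι - 1) • b := fun i => by
    rw [← add_sum_erase _ _ (mem_univ i)]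
    refine add_le_add (hdiag i) ?_
    rw [← card_univ, ← card_erase_of_mem (mem_univ i)]
    exact sum_le_card_nsmul _ _ _ fun j hj => hoff i j (ne_of_mem_erase hj).symm
  calc ∑ i, ∑ j, G i j ≤ ∑ _i : ι, (a + (Fintype.card ι - 1) • b) := sum_le_sum fun i _ => hrow i
    _ = _ := by rw [sum_const, card_univ, smul_add, mul_nsmul']

theorem two_mul_card_eq_card_of_mem_iff_notMem [Fintype X] [DecidableEq X] {σ : X → X}
    (hσ : Function.Involutive σ) {M : Finset X} (hM : ∀ x, x ∈ M ↔ σ x ∉ M) : 2 * #M = Fintype.card X := by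
  have hcompl : Mᶜ = M.image σ := by
    ext x
    rw [mem_compl, mem_image]
    constructor
    · intro hx
      exact ⟨σ x, (hM (σ x)).2 (by rwa [hσ x]), hσ x⟩
    · rintro ⟨y, hy, rfl⟩
      exact (hM y).1 hy
  rw [← card_add_card_compl M, hcompl, card_image_of_injective _ hσ.injective, two_mul]

section SignVector

variable [DecidableEq X]

def signVector (s : Finset X) (x : X) : ℤ := if x ∈ s then 1 else -1

theorem odd_signVector (s : Finset X) (x : X) : Odd (signVector s x) := by
  unfold signVector; split_ifs <;> decide

theorem sum_signVector_mul_signVector [Fintype X] (s t : Finset X) :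
    ∑ x, signVector s x * signVector t x =
      Fintype.card X - 2 * #s - 2 * #t + 4 * #(s ∩ t) := by
  have hpt : ∀ x, signVector s x * signVector t x =
      1 - 2 * (if x ∈ s then 1 else 0) - 2 * (if x ∈ t then 1 else 0) +
        4 * (if x ∈ s ∩ t then 1 else 0) := fun x => by
    unfold signVector; simp only [mem_inter]; split_ifs <;> simp_all
  simp only [hpt, sum_add_distrib, sum_sub_distrib, ← mul_sum, sum_boole, filter_mem_eq_inter,
    univ_inter, sum_const, card_univ]
  simp

end SignVector

end

theorem edge_constraint_odd_general {X : Type*} [Fintype X] [DecidableEq X]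
    (d k : ℕ) (hk : 3 ≤ k) (hodd : Odd k)
    (hX : Fintype.card X = 2 * d)
    (σ : X → X) (hσinv : ∀ x, σ (σ x) = x)
    (M : Fin k → Finset X)
    (hM : ∀ α, ∀ x : X, x ∈ M α ↔ σ x ∉ M α)
    (he : ∀ α β : Fin k, α < β → ((M α ∩ M β).card : ℤ) ≤ (d : ℤ) - 4) :
    (k + 1) * d ≥ 8 * k := by
  have hcard α : #(M α) = d := by
    have := two_mul_card_eq_card_of_mem_iff_notMem hσinv (hM α); omega
  have hinner α β : ∑ x, signVector (M α) x * signVector (M β) x = 4 * #(M α ∩ M β) - 2 * d := by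
    rw [sum_signVector_mul_signVector, hX, hcard, hcard]; push_cast; ring
  have hoff α β (hne : α ≠ β) : ∑ x, signVector (M α) x * signVector (M β) x ≤ 2 * d - 16 := by
    rcases hne.lt_or_gt with h | h
    · linarith [hinner α β, he α β h]
    · linarith [hinner α β, inter_comm (M α) (M β) ▸ he β α h]
  have hdiag α : ∑ x, signVector (M α) x * signVector (M α) x ≤ 2 * d := by
    rw [hinner, inter_self, hcard]; linarith
  have hlow : (2 * d : ℤ) ≤ ∑ x, (∑ α, signVector (M α) x) ^ 2 := by
    have := card_nsmul_le_sum univ (fun x => (∑ α, signVector (M α) x) ^ 2) 1 fun x _ =>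
      Int.one_le_sq_of_odd <| (Int.odd_sum_iff_odd_card fun α _ => odd_signVector _ x).2 <| by
        rwa [card_univ, Fintype.card_fin]
    simpa [hX] using this
  have hup := sum_sum_le_of_diag_le_of_offDiag_le _ hdiag hoff
  rw [← sum_sq_sum_eq_sum_sum_sum_mul] at hup
  simp only [Fintype.card_fin, nsmul_eq_mul] at hup
  push_cast [show 1 ≤ k by omega] at hup
  have hk' : (3 : ℤ) ≤ k := by exact_mod_cast hk
  -- `2dk + k(k-1)(2d-16) - 2d = 2(k-1)((k+1)d - 8k)`
  zify
  nlinarith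

/-- If `k` is odd, `k ≥ 3`, and all edge intersection numbers satisfy
`|M α ∩ M β| ≤ d - 4` (as integers), then `(k+1) * d ≥ 8 * k`. -/
theorem edge_constraint_odd {X : Type*} [Fintype X] [DecidableEq X]
    (d k : ℕ) (hd : 0 < d) (hk : 3 ≤ k) (hodd : Odd k)
    (hX : Fintype.card X = 2 * d)
    (σ : X → X) (hσinv : ∀ x, σ (σ x) = x) (hσfpf : ∀ x, σ x ≠ x)
    (M : Fin k → Finset X)
    (hM : ∀ α, ∀ x : X, x ∈ M α ↔ σ x ∉ M α)
    (he : ∀ α β : Fin k, α < β → ((M α ∩ M β).card : ℤ) ≤ (d : ℤ) - 4) :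
    (k + 1) * d ≥ 8 * k :=
  edge_constraint_odd_general d k hk hodd hX σ hσinv M hM he
end

section
/- If k is even, then the sum of all edge intersection numbers is bounded below in terms of the dimension: 4·Σ_{1 ≤ α < β ≤ k} |M_α ∩ M_β| ≥ k·(k−2)·d. -/
/-!
Let `n x` be the number of sets `M α` containing `x`. Double counting gives
`∑_{α<β} |M α ∩ M β| = ∑_x C(n x, 2)`, and admissibility gives `n x + n (σ x) = k`.
Since `4 (C(a,2) + C(b,2)) - (a+b)(a+b-2) = (a-b)^2 ≥ 0`, pairing each `x` with `σ x` yields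
`8 ∑_x C(n x, 2) ≥ |X| k (k-2) = 2 d k (k-2)`.
-/

open Finset

section IncidenceCounting

variable {ι X : Type*} [Fintype ι] [DecidableEq X]

def memCount (M : ι → Finset X) (x : X) : ℕ := #{i | x ∈ M i}

theorem sum_card_inter_filter_lt_eq_sum_choose_two [Fintype X] [LinearOrder ι]
    (M : ι → Finset X) :
    ∑ p ∈ univ.filter (fun p : ι × ι => p.1 < p.2), #(M p.1 ∩ M p.2)
      = ∑ x, (memCount M x).choose 2 := by
  convert sum_card_bipartiteAbove_eq_sum_card_bipartiteBelow (t := univ)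
    (r := fun (p : ι × ι) x => x ∈ M p.1 ∧ x ∈ M p.2) using 3 with p _ x _
  · ext x
    simp [bipartiteAbove]
  · rw [memCount, ← card_product_filter_lt]
    congr 1
    ext p
    simp only [bipartiteBelow, mem_filter, mem_product, mem_univ, true_and]
    tauto

theorem memCount_add_memCount_eq_card {σ : X → X} {M : ι → Finset X}
    (hM : ∀ i x, x ∈ M i ↔ σ x ∉ M i) (x : X) :
    memCount M x + memCount M (σ x) = Fintype.card ι := by
  have hσx : memCount M (σ x) = #{i | x ∉ M i} := by
    rw [memCount]
    congr 1
    exact filter_congr fun i _ => by rw [hM i x, not_not]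
  rw [hσx, memCount, card_filter_add_card_filter_not, card_univ]

theorem mul_sub_two_le_four_mul_choose_two_add (a b : ℕ) :
    (a + b) * (a + b - 2) ≤ 4 * (a.choose 2 + b.choose 2) := by
  rcases Nat.lt_or_ge (a + b) 2 with hab | hab
  · simp [Nat.sub_eq_zero_of_le hab.le]
  · qify [hab]
    rw [Nat.cast_choose_two, Nat.cast_choose_two]
    nlinarith [sq_nonneg ((a : ℚ) - b)]

theorem card_mul_sub_two_mul_card_le_eight_mul_sum_card_inter [Fintype X] [LinearOrder ι]
    {σ : X → X} (hσ : Function.Involutive σ) {M : ι → Finset X}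
    (hM : ∀ i x, x ∈ M i ↔ σ x ∉ M i) :
    Fintype.card ι * (Fintype.card ι - 2) * Fintype.card X
      ≤ 8 * ∑ p ∈ univ.filter (fun p : ι × ι => p.1 < p.2), #(M p.1 ∩ M p.2) := by
  calc Fintype.card ι * (Fintype.card ι - 2) * Fintype.card X
      = ∑ _x : X, Fintype.card ι * (Fintype.card ι - 2) := by simp [mul_comm]
    _ ≤ ∑ x, 4 * ((memCount M x).choose 2 + (memCount M (σ x)).choose 2) :=
        sum_le_sum fun x _ => memCount_add_memCount_eq_card hM x ▸
          mul_sub_two_le_four_mul_choose_two_add _ _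
    _ = 8 * ∑ x, (memCount M x).choose 2 := by
        rw [← mul_sum, sum_add_distrib,
          Fintype.sum_bijective σ hσ.bijective (fun x => (memCount M (σ x)).choose 2)
            (fun x => (memCount M x).choose 2) fun _ => rfl]
        ring
    _ = 8 * ∑ p ∈ univ.filter (fun p : ι × ι => p.1 < p.2), #(M p.1 ∩ M p.2) := by
        rw [sum_card_inter_filter_lt_eq_sum_choose_two]

end IncidenceCounting

theorem edge_sum_lower_bound_even_general {X : Type*} [Fintype X] [DecidableEq X]
    (d k : ℕ)
    (hX : Fintype.card X = 2 * d)
    (σ : X → X) (hσinv : ∀ x, σ (σ x) = x)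
    (M : Fin k → Finset X)
    (hM : ∀ α, ∀ x : X, x ∈ M α ↔ σ x ∉ M α) :
    4 * ∑ p ∈ univ.filter (fun p : Fin k × Fin k => p.1 < p.2), (M p.1 ∩ M p.2).card
      ≥ k * (k - 2) * d := by
  have h := card_mul_sub_two_mul_card_le_eight_mul_sum_card_inter hσinv hM
  rw [Fintype.card_fin, hX] at h
  linarith

/-- If `k` is even, the sum of all edge intersection numbers is
bounded below: `4 * Σ_{α<β} |M α ∩ M β| ≥ k * (k-2) * d`. -/
theorem edge_sum_lower_bound_even {X : Type*} [Fintype X] [DecidableEq X]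
    (d k : ℕ) (hd : 0 < d) (hk : 0 < k) (heven : Even k)
    (hX : Fintype.card X = 2 * d)
    (σ : X → X) (hσinv : ∀ x, σ (σ x) = x) (hσfpf : ∀ x, σ x ≠ x)
    (M : Fin k → Finset X)
    (hM : ∀ α, ∀ x : X, x ∈ M α ↔ σ x ∉ M α) :
    4 * ∑ p ∈ univ.filter (fun p : Fin k × Fin k => p.1 < p.2), (M p.1 ∩ M p.2).card
      ≥ k * (k - 2) * d :=
  edge_sum_lower_bound_even_general d k hX σ hσinv M hM
end

section
/- If k is odd, then the sum of all tetrahedral intersection numbers is bounded below in terms of the dimension: Σ_{1 ≤ α < β < γ < δ ≤ k} |M_α ∩ M_β ∩ M_γ ∩ M_δ| ≥ (C((k+1)/2, 4) + C((k−1)/2, 4))·d, where C(m,4) denotes the binomial coefficient m choose 4. -/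
open Finset

/-!
Count the sum by elements: `x` lies in `M_α ∩ M_β ∩ M_γ ∩ M_δ` for exactly the increasing
quadruples of indices in `{α | x ∈ M_α}`, so the sum is at least `∑ₓ C(nₓ, 4)` with
`nₓ = #{α | x ∈ M_α}`. Admissibility gives `nₓ + n_{σx} = k`, and since `m ↦ C(m, 4)` is convex,
`C(nₓ, 4) + C(n_{σx}, 4) ≥ C((k+1)/2, 4) + C((k-1)/2, 4)`. Summing over the `2d` elements counts
each pair `{x, σx}` twice.
-/

theorem Nat.choose_add_choose_le_of_le_of_le (r : ℕ) {a b p q : ℕ} (hqp : q ≤ p) (hpa : p ≤ a)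
    (hsum : a + b = p + q) : p.choose r + q.choose r ≤ a.choose r + b.choose r := by
  induction a generalizing b with
  | zero =>
    obtain ⟨rfl, rfl, rfl⟩ : p = 0 ∧ q = 0 ∧ b = 0 := by omega
    rfl
  | succ a ih =>
    obtain rfl | hpa := eq_or_lt_of_le hpa
    · obtain rfl : b = q := by omega
      rfl
    cases r with
    | zero => simp
    | succ s =>
      have hba : b ≤ a := by omega
      have ih' := ih (b := b + 1) (by omega) (by omega)
      have := Nat.choose_le_choose s hba
      have := Nat.choose_succ_succ' a s
      have := Nat.choose_succ_succ' b s
      omega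

theorem Nat.choose_add_choose_le_of_add_eq_odd (r : ℕ) {k a b : ℕ} (hk : Odd k)
    (hab : a + b = k) :
    ((k + 1) / 2).choose r + ((k - 1) / 2).choose r ≤ a.choose r + b.choose r := by
  obtain ⟨m, rfl⟩ := hk
  rw [show (2 * m + 1 + 1) / 2 = m + 1 by omega, show (2 * m + 1 - 1) / 2 = m by omega]
  rcases le_total b a with hba | hab'
  · exact Nat.choose_add_choose_le_of_le_of_le r (by omega) (by omega) (by omega)
  · rw [add_comm (a.choose r)]
    exact Nat.choose_add_choose_le_of_le_of_le r (by omega) (by omega) (by omega)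

def increasingQuadruples (ι : Type*) [Fintype ι] [LinearOrder ι] : Finset (ι × ι × ι × ι) :=
  univ.filter fun q => q.1 < q.2.1 ∧ q.2.1 < q.2.2.1 ∧ q.2.2.1 < q.2.2.2

section Quadruples

variable {ι : Type*} [Fintype ι] [LinearOrder ι]

theorem choose_four_le_card_filter_increasingQuadruples (A : Finset ι) :
    (#A).choose 4 ≤
      #{q ∈ increasingQuadruples ι | q.1 ∈ A ∧ q.2.1 ∈ A ∧ q.2.2.1 ∈ A ∧ q.2.2.2 ∈ A} := by
  rw [← card_powersetCard]
  refine card_le_card_of_surjOn (fun q => {q.1, q.2.1, q.2.2.1, q.2.2.2}) ?_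
  intro s hs
  obtain ⟨hsA, hs4⟩ := mem_powersetCard.mp hs
  set f := s.orderEmbOfFin hs4
  have hf : ∀ i, f i ∈ A := fun i => hsA (s.orderEmbOfFin_mem hs4 i)
  refine ⟨(f 0, f 1, f 2, f 3), ?_, ?_⟩
  · simp only [increasingQuadruples, mem_coe, mem_filter, mem_univ, true_and]
    exact ⟨⟨f.strictMono (by decide), f.strictMono (by decide), f.strictMono (by decide)⟩,
      hf 0, hf 1, hf 2, hf 3⟩
  · simpa [Fin.univ_succ, image_insert] using s.image_orderEmbOfFin_univ hs4

theorem sum_choose_four_le_sum_card_inter {X : Type*} [Fintype X] [DecidableEq X]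
    (M : ι → Finset X) :
    ∑ x, (#{α | x ∈ M α}).choose 4 ≤
      ∑ q ∈ increasingQuadruples ι, #(M q.1 ∩ M q.2.1 ∩ M q.2.2.1 ∩ M q.2.2.2) := by
  have hcount := sum_card_bipartiteAbove_eq_sum_card_bipartiteBelow
    (s := increasingQuadruples ι) (t := (univ : Finset X))
    (r := fun q x => x ∈ M q.1 ∩ M q.2.1 ∩ M q.2.2.1 ∩ M q.2.2.2)
  simp only [bipartiteAbove, bipartiteBelow, filter_mem_eq_inter, univ_inter] at hcount
  rw [hcount]
  refine sum_le_sum fun x _ => (choose_four_le_card_filter_increasingQuadruples _).trans_eq ?_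
  congr 1
  ext q
  simp

end Quadruples

theorem Function.Involutive.card_mul_le_two_mul_sum {X : Type*} [Fintype X] {σ : X → X}
    (hσ : σ.Involutive) (f : X → ℕ) {c : ℕ} (h : ∀ x, c ≤ f x + f (σ x)) :
    Fintype.card X * c ≤ 2 * ∑ x, f x :=
  calc Fintype.card X * c = ∑ _x : X, c := by rw [sum_const, card_univ, smul_eq_mul]
    _ ≤ ∑ x, (f x + f (σ x)) := sum_le_sum fun x _ => h x
    _ = 2 * ∑ x, f x := by
      rw [sum_add_distrib, hσ.bijective.sum_comp f, two_mul]

theorem card_filter_mem_add_card_filter_mem_of_iff_notMem {X ι : Type*} [DecidableEq X]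
    [Fintype ι] {σ : X → X} {M : ι → Finset X} (hM : ∀ α, ∀ x, x ∈ M α ↔ σ x ∉ M α) (x : X) :
    #{α | x ∈ M α} + #{α | σ x ∈ M α} = Fintype.card ι := by
  have hcompl : univ.filter (fun α => σ x ∈ M α) = univ.filter (fun α => x ∉ M α) :=
    filter_congr fun α _ => by rw [hM α x, not_not]
  rw [hcompl, card_filter_add_card_filter_not, card_univ]

theorem tetrahedral_sum_lower_bound_odd_general {X : Type*} [Fintype X] [DecidableEq X]
    (d k : ℕ) (hodd : Odd k)
    (hX : Fintype.card X = 2 * d)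
    (σ : X → X) (hσinv : ∀ x, σ (σ x) = x)
    (M : Fin k → Finset X)
    (hM : ∀ α, ∀ x : X, x ∈ M α ↔ σ x ∉ M α) :
    ∑ q ∈ univ.filter
        (fun q : Fin k × Fin k × Fin k × Fin k =>
          q.1 < q.2.1 ∧ q.2.1 < q.2.2.1 ∧ q.2.2.1 < q.2.2.2),
        (M q.1 ∩ M q.2.1 ∩ M q.2.2.1 ∩ M q.2.2.2).card
      ≥ (Nat.choose ((k + 1) / 2) 4 + Nat.choose ((k - 1) / 2) 4) * d := by
  have hpair (x : X) : ((k + 1) / 2).choose 4 + ((k - 1) / 2).choose 4 ≤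
      (#{α | x ∈ M α}).choose 4 + (#{α | σ x ∈ M α}).choose 4 := by
    exact Nat.choose_add_choose_le_of_add_eq_odd 4 hodd
      ((card_filter_mem_add_card_filter_mem_of_iff_notMem hM x).trans (Fintype.card_fin k))
  have hsum := Function.Involutive.card_mul_le_two_mul_sum hσinv _ hpair
  rw [hX] at hsum
  calc (((k + 1) / 2).choose 4 + ((k - 1) / 2).choose 4) * d
      ≤ ∑ x, (#{α | x ∈ M α}).choose 4 := by linarith
    _ ≤ _ := sum_choose_four_le_sum_card_inter M

/-- If `k` is odd, the sum of all tetrahedral intersection numbers is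
bounded below:
`Σ_{α<β<γ<δ} |M α ∩ M β ∩ M γ ∩ M δ| ≥ (C((k+1)/2, 4) + C((k-1)/2, 4)) * d`. -/
theorem tetrahedral_sum_lower_bound_odd {X : Type*} [Fintype X] [DecidableEq X]
    (d k : ℕ) (hd : 0 < d) (hk : 0 < k) (hodd : Odd k)
    (hX : Fintype.card X = 2 * d)
    (σ : X → X) (hσinv : ∀ x, σ (σ x) = x) (hσfpf : ∀ x, σ x ≠ x)
    (M : Fin k → Finset X)
    (hM : ∀ α, ∀ x : X, x ∈ M α ↔ σ x ∉ M α) :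
    ∑ q ∈ univ.filter
        (fun q : Fin k × Fin k × Fin k × Fin k =>
          q.1 < q.2.1 ∧ q.2.1 < q.2.2.1 ∧ q.2.2.1 < q.2.2.2),
        (M q.1 ∩ M q.2.1 ∩ M q.2.2.1 ∩ M q.2.2.2).card
      ≥ (Nat.choose ((k + 1) / 2) 4 + Nat.choose ((k - 1) / 2) 4) * d :=
  tetrahedral_sum_lower_bound_odd_general d k hodd hX σ hσinv M hM
end

section
/- If k is even, then the sum of all tetrahedral intersection numbers is bounded below in terms of the dimension: Σ_{1 ≤ α < β < γ < δ ≤ k} |M_α ∩ M_β ∩ M_γ ∩ M_δ| ≥ 2·C(k/2, 4)·d, where C(m,4) denotes the binomial coefficient m choose 4. -/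
/-!
Count by points: `x` lies in `C(n x, 4)` of the quadruple intersections, where `n x` is the number
of `M α` containing `x`. Admissibility gives `n x + n (σ x) = k`, so by convexity of `n ↦ C(n, 4)`
the two points `x` and `σ x` together contribute at least `2 C(k/2, 4)`; summing this over all
`x ∈ X` counts every point twice.
-/

open Finset

namespace Nat

theorem choose_succ_add_choose_le (n : ℕ) {a b : ℕ} (hab : a ≤ b) :
    (a + 1).choose (n + 1) + b.choose (n + 1) ≤ a.choose (n + 1) + (b + 1).choose (n + 1) := by
  have := choose_le_choose n hab
  rw [choose_succ_succ' a, choose_succ_succ' b]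
  omega

theorem two_mul_choose_le_choose_sub_add_choose_add (n : ℕ) {m j : ℕ} (hj : j ≤ m) :
    2 * m.choose n ≤ (m - j).choose n + (m + j).choose n := by
  induction j with
  | zero => rw [two_mul]; rfl
  | succ j ih =>
    cases n with
    | zero => simp
    | succ n =>
      have step := choose_succ_add_choose_le n (a := m - (j + 1)) (b := m + j) (by omega)
      rw [show m - (j + 1) + 1 = m - j by omega] at step
      exact (ih (by omega)).trans step

theorem two_mul_choose_le_choose_add_choose (n : ℕ) {m a b : ℕ} (h : 2 * m ≤ a + b) :
    2 * m.choose n ≤ a.choose n + b.choose n := by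
  wlog hab : a ≤ b generalizing a b
  · rw [add_comm]; exact this (by omega) (by omega)
  by_cases hma : m ≤ a
  · rw [two_mul]
    exact add_le_add (choose_le_choose n hma) (choose_le_choose n (hma.trans hab))
  · calc 2 * m.choose n ≤ (m - (m - a)).choose n + (m + (m - a)).choose n :=
          two_mul_choose_le_choose_sub_add_choose_add n (Nat.sub_le m a)
      _ ≤ a.choose n + b.choose n := by
          rw [show m - (m - a) = a by omega]
          exact Nat.add_le_add_left (choose_le_choose n (by omega)) _

end Nat

section Quadruples

variable {α : Type*} [LinearOrder α]

theorem strictMono_vecCons_four {a b c d : α} (hab : a < b) (hbc : b < c) (hcd : c < d) :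
    StrictMono ![a, b, c, d] :=
  Fin.strictMono_iff_lt_succ.2 fun i => by fin_cases i <;> assumption

theorem card_insert_four_of_lt {a b c d : α} (hab : a < b) (hbc : b < c) (hcd : c < d) :
    ({a, b, c, d} : Finset α).card = 4 :=
  card_eq_four.2 ⟨a, b, c, d, hab.ne, (hab.trans hbc).ne, (hab.trans (hbc.trans hcd)).ne, hbc.ne,
    (hbc.trans hcd).ne, hcd.ne, rfl⟩

variable [Fintype α]

theorem sum_filter_lt_quadruples_eq_sum_powersetCard {β : Type*} [AddCommMonoid β]
    (g : Finset α → β) :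
    ∑ q ∈ univ.filter (fun q : α × α × α × α => q.1 < q.2.1 ∧ q.2.1 < q.2.2.1 ∧ q.2.2.1 < q.2.2.2),
      g {q.1, q.2.1, q.2.2.1, q.2.2.2} = ∑ t ∈ powersetCard 4 univ, g t := by
  refine sum_bij (fun q _ => {q.1, q.2.1, q.2.2.1, q.2.2.2}) ?_ ?_ ?_ fun _ _ => rfl
  · rintro ⟨a, b, c, d⟩ hq
    simp only [mem_filter, mem_univ, true_and] at hq
    exact mem_powersetCard.2 ⟨subset_univ _, card_insert_four_of_lt hq.1 hq.2.1 hq.2.2⟩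
  · rintro ⟨a, b, c, d⟩ hq ⟨a', b', c', d'⟩ hq' heq
    simp only [mem_filter, mem_univ, true_and] at hq hq' heq
    have hcard := card_insert_four_of_lt hq.1 hq.2.1 hq.2.2
    have h := orderEmbOfFin_unique hcard (f := ![a, b, c, d]) (fun i => by fin_cases i <;> simp)
      (strictMono_vecCons_four hq.1 hq.2.1 hq.2.2)
    have h' := orderEmbOfFin_unique hcard (f := ![a', b', c', d'])
      (fun i => by fin_cases i <;> simp [heq]) (strictMono_vecCons_four hq'.1 hq'.2.1 hq'.2.2)
    -- both quadruples are the increasing enumeration of the same four-element set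
    have := congrFun (h.trans h'.symm)
    simp only [Prod.mk.injEq]
    exact ⟨this 0, this 1, this 2, this 3⟩
  · intro t ht
    have hcard := (mem_powersetCard.1 ht).2
    set e := t.orderEmbOfFin hcard
    refine ⟨(e 0, e 1, e 2, e 3), ?_, ?_⟩
    · simp only [mem_filter, mem_univ, true_and]
      exact ⟨e.strictMono (by decide), e.strictMono (by decide), e.strictMono (by decide)⟩
    · have hsorted := card_insert_four_of_lt (e.strictMono (show (0 : Fin 4) < 1 by decide))
        (e.strictMono (show (1 : Fin 4) < 2 by decide))
        (e.strictMono (show (2 : Fin 4) < 3 by decide))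
      refine eq_of_subset_of_card_le ?_ (by rw [hcard, hsorted])
      simp only [insert_subset_iff, singleton_subset_iff]
      exact ⟨t.orderEmbOfFin_mem hcard 0, t.orderEmbOfFin_mem hcard 1, t.orderEmbOfFin_mem hcard 2,
        t.orderEmbOfFin_mem hcard 3⟩

end Quadruples

theorem card_mul_le_two_mul_sum_of_le_add_comp {X : Type*} [Fintype X] {σ : X → X}
    (hσ : σ.Bijective) {f : X → ℕ} {c : ℕ} (h : ∀ x, c ≤ f x + f (σ x)) :
    Fintype.card X * c ≤ 2 * ∑ x, f x :=
  calc Fintype.card X * c = ∑ _x : X, c := by simp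
    _ ≤ ∑ x, (f x + f (σ x)) := sum_le_sum fun x _ => h x
    _ = 2 * ∑ x, f x := by rw [sum_add_distrib, hσ.sum_comp f, two_mul]

theorem sum_card_inter_filter_lt_quadruples {ι X : Type*} [LinearOrder ι] [Fintype ι] [Fintype X]
    [DecidableEq X] (M : ι → Finset X) :
    ∑ q ∈ univ.filter (fun q : ι × ι × ι × ι => q.1 < q.2.1 ∧ q.2.1 < q.2.2.1 ∧ q.2.2.1 < q.2.2.2),
      (M q.1 ∩ M q.2.1 ∩ M q.2.2.1 ∩ M q.2.2.2).card = ∑ x, (#{α | x ∈ M α}).choose 4 := by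
  let r : X → Finset ι → Prop := fun x t => ∀ α ∈ t, x ∈ M α
  calc _ = ∑ t ∈ powersetCard 4 univ, #{x | r x t} := by
        rw [← sum_filter_lt_quadruples_eq_sum_powersetCard]
        refine sum_congr rfl fun q _ => congrArg card ?_
        ext x
        simp [r]
    _ = ∑ x, #{t ∈ powersetCard 4 univ | r x t} :=
        (sum_card_bipartiteAbove_eq_sum_card_bipartiteBelow r).symm
    _ = ∑ x, (#{α | x ∈ M α}).choose 4 := by
        refine sum_congr rfl fun x _ => ?_
        rw [← card_powersetCard]
        congr 1
        ext t
        simp [r, mem_powersetCard, subset_iff, and_comm]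

theorem card_filter_mem_add_card_filter_mem_comp {ι X : Type*} [Fintype ι] [DecidableEq X]
    {σ : X → X} {M : ι → Finset X} (hM : ∀ α x, x ∈ M α ↔ σ x ∉ M α) (x : X) :
    #{α | x ∈ M α} + #{α | σ x ∈ M α} = Fintype.card ι := by
  simp_rw [fun α => show σ x ∈ M α ↔ x ∉ M α by rw [hM α x, not_not]]
  exact card_filter_add_card_filter_not _

theorem tetrahedral_sum_lower_bound_even_general {X : Type*} [Fintype X] [DecidableEq X]
    (d k : ℕ)
    (hX : Fintype.card X = 2 * d)
    (σ : X → X) (hσinv : ∀ x, σ (σ x) = x)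
    (M : Fin k → Finset X)
    (hM : ∀ α, ∀ x : X, x ∈ M α ↔ σ x ∉ M α) :
    ∑ q ∈ univ.filter
        (fun q : Fin k × Fin k × Fin k × Fin k =>
          q.1 < q.2.1 ∧ q.2.1 < q.2.2.1 ∧ q.2.2.1 < q.2.2.2),
        (M q.1 ∩ M q.2.1 ∩ M q.2.2.1 ∩ M q.2.2.2).card
      ≥ 2 * Nat.choose (k / 2) 4 * d := by
  rw [ge_iff_le, sum_card_inter_filter_lt_quadruples]
  have hpair : ∀ x,
      2 * (k / 2).choose 4 ≤ (#{α | x ∈ M α}).choose 4 + (#{α | σ x ∈ M α}).choose 4 :=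
    fun x => Nat.two_mul_choose_le_choose_add_choose 4 <| by
      rw [card_filter_mem_add_card_filter_mem_comp hM, Fintype.card_fin]
      exact Nat.mul_div_le k 2
  have := card_mul_le_two_mul_sum_of_le_add_comp (Function.Involutive.bijective hσinv) hpair
  rw [hX] at this
  linarith

/-- If `k` is even, the sum of all tetrahedral intersection numbers is
bounded below: `Σ_{α<β<γ<δ} |M α ∩ M β ∩ M γ ∩ M δ| ≥ 2 * C(k/2, 4) * d`. -/
theorem tetrahedral_sum_lower_bound_even {X : Type*} [Fintype X] [DecidableEq X]
    (d k : ℕ) (hd : 0 < d) (hk : 0 < k) (heven : Even k)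
    (hX : Fintype.card X = 2 * d)
    (σ : X → X) (hσinv : ∀ x, σ (σ x) = x) (hσfpf : ∀ x, σ x ≠ x)
    (M : Fin k → Finset X)
    (hM : ∀ α, ∀ x : X, x ∈ M α ↔ σ x ∉ M α) :
    ∑ q ∈ univ.filter
        (fun q : Fin k × Fin k × Fin k × Fin k =>
          q.1 < q.2.1 ∧ q.2.1 < q.2.2.1 ∧ q.2.2.1 < q.2.2.2),
        (M q.1 ∩ M q.2.1 ∩ M q.2.2.1 ∩ M q.2.2.2).card
      ≥ 2 * Nat.choose (k / 2) 4 * d :=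
  tetrahedral_sum_lower_bound_even_general d k hX σ hσinv M hM
end

section
/- For three admissible subsets the pairwise intersection sizes satisfy the identity |M_1 ∩ M_2| + |M_1 ∩ M_3| + |M_2 ∩ M_3| = d + 2·|M_1 ∩ M_2 ∩ M_3|. -/
/-!
Since `σ` is a bijection carrying each admissible set onto its complement, every admissible set
has `d` elements and `σ` carries `M₁ ∩ M₂ ∩ M₃` onto `M₁ᶜ ∩ M₂ᶜ ∩ M₃ᶜ`. So with
`t = |M₁ ∩ M₂ ∩ M₃|` and `S` the sum of the pairwise intersection sizes, inclusion–exclusion for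
the complement of `M₁ ∪ M₂ ∪ M₃` reads `t = 2d - 3d + S - t`.
-/

open Finset

namespace Finset

variable {α : Type*} [DecidableEq α]

theorem card_union_union_add_card_inter (A B C : Finset α) :
    #(A ∪ B ∪ C) + #(A ∩ B) + #(A ∩ C) + #(B ∩ C) = #A + #B + #C + #(A ∩ B ∩ C) := by
  have hAB := card_union_add_card_inter A B
  have hABC := card_union_add_card_inter (A ∪ B) C
  have hAC_BC := card_union_add_card_inter (A ∩ C) (B ∩ C)
  rw [union_inter_distrib_right] at hABC
  rw [inter_inter_inter_comm, inter_self] at hAC_BC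
  omega

theorem card_compl_inter_compl_inter_compl_add [Fintype α] (A B C : Finset α) :
    #(Aᶜ ∩ Bᶜ ∩ Cᶜ) + #A + #B + #C + #(A ∩ B ∩ C)
      = Fintype.card α + #(A ∩ B) + #(A ∩ C) + #(B ∩ C) := by
  have hcompl := card_compl_add_card (A ∪ B ∪ C)
  have hincl := card_union_union_add_card_inter A B C
  rw [compl_union, compl_union] at hcompl
  omega

end Finset

section Admissible

variable {X : Type*} [Fintype X] [DecidableEq X] {σ : X → X}

def Admissible (σ : X → X) (M : Finset X) : Prop := ∀ x, x ∈ M ↔ σ x ∉ M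

theorem Admissible.mem_compl_iff {M : Finset X} (hM : Admissible σ M) (x : X) :
    x ∈ Mᶜ ↔ σ x ∈ M :=
  mem_compl.trans (hM x).not_left

theorem Admissible.two_mul_card (hσ : Function.Involutive σ) {M : Finset X}
    (hM : Admissible σ M) : 2 * #M = Fintype.card X := by
  have hswap : #Mᶜ = #M := card_equiv hσ.toPerm hM.mem_compl_iff
  rw [← card_add_card_compl M, hswap, two_mul]

theorem Admissible.card_compl_inter_compl_inter_compl (hσ : Function.Involutive σ)
    {M₁ M₂ M₃ : Finset X} (h₁ : Admissible σ M₁) (h₂ : Admissible σ M₂) (h₃ : Admissible σ M₃) :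
    #(M₁ᶜ ∩ M₂ᶜ ∩ M₃ᶜ) = #(M₁ ∩ M₂ ∩ M₃) :=
  card_equiv hσ.toPerm fun x => by
    simp only [mem_inter, h₁.mem_compl_iff, h₂.mem_compl_iff, h₃.mem_compl_iff,
      Function.Involutive.coe_toPerm]

end Admissible

theorem three_set_intersection_identity_general {X : Type*} [Fintype X] [DecidableEq X]
    (d : ℕ)
    (hX : Fintype.card X = 2 * d)
    (σ : X → X) (hσinv : ∀ x, σ (σ x) = x)
    (M₁ M₂ M₃ : Finset X)
    (hM₁ : ∀ x : X, x ∈ M₁ ↔ σ x ∉ M₁)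
    (hM₂ : ∀ x : X, x ∈ M₂ ↔ σ x ∉ M₂)
    (hM₃ : ∀ x : X, x ∈ M₃ ↔ σ x ∉ M₃) :
    (M₁ ∩ M₂).card + (M₁ ∩ M₃).card + (M₂ ∩ M₃).card
      = d + 2 * (M₁ ∩ M₂ ∩ M₃).card := by
  have hσ : Function.Involutive σ := hσinv
  have hcard₁ := Admissible.two_mul_card hσ hM₁
  have hcard₂ := Admissible.two_mul_card hσ hM₂
  have hcard₃ := Admissible.two_mul_card hσ hM₃
  have htriple := Admissible.card_compl_inter_compl_inter_compl hσ hM₁ hM₂ hM₃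
  have hincl := card_compl_inter_compl_inter_compl_add M₁ M₂ M₃
  omega

/-- For three admissible subsets of a `2d`-element set with a
fixed-point-free involution,
`|M₁ ∩ M₂| + |M₁ ∩ M₃| + |M₂ ∩ M₃| = d + 2 * |M₁ ∩ M₂ ∩ M₃|`. -/
theorem three_set_intersection_identity {X : Type*} [Fintype X] [DecidableEq X]
    (d : ℕ) (hd : 0 < d)
    (hX : Fintype.card X = 2 * d)
    (σ : X → X) (hσinv : ∀ x, σ (σ x) = x) (hσfpf : ∀ x, σ x ≠ x)
    (M₁ M₂ M₃ : Finset X)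
    (hM₁ : ∀ x : X, x ∈ M₁ ↔ σ x ∉ M₁)
    (hM₂ : ∀ x : X, x ∈ M₂ ↔ σ x ∉ M₂)
    (hM₃ : ∀ x : X, x ∈ M₃ ↔ σ x ∉ M₃) :
    (M₁ ∩ M₂).card + (M₁ ∩ M₃).card + (M₂ ∩ M₃).card
      = d + 2 * (M₁ ∩ M₂ ∩ M₃).card :=
  three_set_intersection_identity_general d hX σ hσinv M₁ M₂ M₃ hM₁ hM₂ hM₃
end

section
/- For four admissible subsets the pairwise intersection sizes satisfy the identity Σ_{1 ≤ α < β ≤ 4} |M_α ∩ M_β| = 2d + n_3 + 4·|M_1 ∩ M_2 ∩ M_3 ∩ M_4|, where n_3 is the number of elements of X belonging to exactly three of the four sets. -/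
/-!
Counting incidences, the sum of the pairwise intersection sizes is `∑ x, (k x).choose 2`, where
the occupancy `k x` is the number of the `M α` containing `x`. Admissibility gives
`k (σ x) = 4 - k x`, and `σ` permutes `X`, so under the sum `f (k x)` may be replaced by any
`g (k x)` with `f j + f (4 - j) = g j + g (4 - j)`. This holds for `f j = j.choose 2` and
`g j = 1 + [j = 3] + 4 [j = 4]`, and `∑ x, g (k x) = 2d + n₃ + 4 |M₁ ∩ M₂ ∩ M₃ ∩ M₄|`.
-/

open Finset Function

theorem Function.Involutive.sum_eq_sum_of_add_reflect {X : Type*} [Fintype X] {σ : X → X}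
    (hσ : Involutive σ)
    {k : X → ℕ} {m : ℕ} (hk : ∀ x, k (σ x) = m - k x) (φ ψ : ℕ → ℕ)
    (h : ∀ j ≤ m, φ j + φ (m - j) = ψ j + ψ (m - j)) :
    ∑ x, φ (k x) = ∑ x, ψ (k x) := by
  have reflect (f : ℕ → ℕ) : ∑ x, f (m - k x) = ∑ x, f (k x) := by
    simpa only [Involutive.coe_toPerm, hk] using Equiv.sum_comp (hσ.toPerm σ) fun x => f (k x)
  have hle (x : X) : k x ≤ m := by
    rw [← hσ x, hk]
    exact Nat.sub_le _ _
  have hpair : ∑ x, (φ (k x) + φ (m - k x)) = ∑ x, (ψ (k x) + ψ (m - k x)) :=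
    sum_congr rfl fun x _ => h _ (hle x)
  rw [sum_add_distrib, sum_add_distrib, reflect, reflect] at hpair
  omega

section Occupancy

variable {ι X : Type*} [Fintype ι] [DecidableEq X]

def occupancy (M : ι → Finset X) (x : X) : ℕ := #{i | x ∈ M i}

theorem sum_card_inter_of_lt_eq_sum_choose_two [Fintype X] [LinearOrder ι] (M : ι → Finset X) :
    ∑ p ∈ univ.filter (fun p : ι × ι => p.1 < p.2), #(M p.1 ∩ M p.2)
      = ∑ x, (occupancy M x).choose 2 := by
  calc ∑ p ∈ univ.filter (fun p : ι × ι => p.1 < p.2), #(M p.1 ∩ M p.2)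
      = ∑ p ∈ univ.filter (fun p : ι × ι => p.1 < p.2),
          ∑ x, if x ∈ M p.1 ∩ M p.2 then 1 else 0 := by
        simp only [sum_boole, filter_mem_eq_inter, univ_inter, Nat.cast_id]
    _ = ∑ x, ∑ p ∈ univ.filter (fun p : ι × ι => p.1 < p.2),
          if x ∈ M p.1 ∩ M p.2 then 1 else 0 := sum_comm
    _ = ∑ x, #{p ∈ univ.filter (x ∈ M ·) ×ˢ univ.filter (x ∈ M ·) | p.1 < p.2} := by
        refine sum_congr rfl fun x _ => ?_
        rw [sum_boole, Nat.cast_id, filter_filter]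
        congr 1
        ext p
        simp only [mem_filter, mem_univ, mem_inter, mem_product, true_and]
        tauto
    _ = ∑ x, (occupancy M x).choose 2 := by simp only [card_product_filter_lt, occupancy]

theorem occupancy_apply_eq_card_sub {σ : X → X} (hσ : Involutive σ) {M : ι → Finset X}
    (hM : ∀ i, ∀ x, x ∈ M i ↔ σ x ∉ M i) (x : X) :
    occupancy M (σ x) = Fintype.card ι - occupancy M x := by
  have hsplit := card_filter_add_card_filter_not (s := univ) (x ∈ M ·)
  simp only [occupancy, hM _ (σ x), hσ x, card_univ] at hsplit ⊢
  omega

theorem card_filter_occupancy_eq_card [Fintype X] (M : ι → Finset X) :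
    #{x | occupancy M x = Fintype.card ι} = #{x | ∀ i, x ∈ M i} := by
  simp only [occupancy, card_eq_iff_eq_univ, filter_eq_self, mem_univ, true_implies]

end Occupancy

theorem four_set_intersection_identity_general {X : Type*} [Fintype X] [DecidableEq X]
    (d : ℕ)
    (hX : Fintype.card X = 2 * d)
    (σ : X → X) (hσinv : ∀ x, σ (σ x) = x)
    (M : Fin 4 → Finset X)
    (hM : ∀ α, ∀ x : X, x ∈ M α ↔ σ x ∉ M α)
    (n₃ : ℕ)
    (hn₃ : n₃ =
      (univ.filter (fun x : X => (univ.filter (fun α : Fin 4 => x ∈ M α)).card = 3)).card) :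
    ∑ p ∈ univ.filter (fun p : Fin 4 × Fin 4 => p.1 < p.2), (M p.1 ∩ M p.2).card
      = 2 * d + n₃ + 4 * (M 0 ∩ M 1 ∩ M 2 ∩ M 3).card := by
  have hreflect (x : X) : occupancy M (σ x) = 4 - occupancy M x := by
    simpa using occupancy_apply_eq_card_sub hσinv hM x
  have hfour : #{x | occupancy M x = 4} = #(M 0 ∩ M 1 ∩ M 2 ∩ M 3) := by
    have hall := card_filter_occupancy_eq_card M
    rw [Fintype.card_fin] at hall
    rw [hall]
    congr 1
    ext x
    simp [Fin.forall_fin_succ]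
  rw [sum_card_inter_of_lt_eq_sum_choose_two]
  calc ∑ x, (occupancy M x).choose 2
      = ∑ x, (1 + (if occupancy M x = 3 then 1 else 0) + 4 * if occupancy M x = 4 then 1 else 0) :=
        Involutive.sum_eq_sum_of_add_reflect hσinv hreflect (Nat.choose · 2)
          (fun j => 1 + (if j = 3 then 1 else 0) + 4 * if j = 4 then 1 else 0) (by decide)
    _ = 2 * d + n₃ + 4 * (M 0 ∩ M 1 ∩ M 2 ∩ M 3).card := by
      simp only [sum_add_distrib, ← mul_sum, sum_boole, sum_const, card_univ, smul_eq_mul, mul_one,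
        Nat.cast_id, hX, hn₃, ← hfour]
      rfl

/-- For four admissible subsets of a `2d`-element set with a
fixed-point-free involution, the sum of the six pairwise intersection sizes equals
`2d + n₃ + 4 * |M₁ ∩ M₂ ∩ M₃ ∩ M₄|`, where `n₃` is the number of elements belonging to
exactly three of the four sets. -/
theorem four_set_intersection_identity {X : Type*} [Fintype X] [DecidableEq X]
    (d : ℕ) (hd : 0 < d)
    (hX : Fintype.card X = 2 * d)
    (σ : X → X) (hσinv : ∀ x, σ (σ x) = x) (hσfpf : ∀ x, σ x ≠ x)
    (M : Fin 4 → Finset X)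
    (hM : ∀ α, ∀ x : X, x ∈ M α ↔ σ x ∉ M α)
    (n₃ : ℕ)
    (hn₃ : n₃ =
      (univ.filter (fun x : X => (univ.filter (fun α : Fin 4 => x ∈ M α)).card = 3)).card) :
    ∑ p ∈ univ.filter (fun p : Fin 4 × Fin 4 => p.1 < p.2), (M p.1 ∩ M p.2).card
      = 2 * d + n₃ + 4 * (M 0 ∩ M 1 ∩ M 2 ∩ M 3).card :=
  four_set_intersection_identity_general d hX σ hσinv M hM n₃ hn₃
end

section
/- Suppose |M_α ∩ M_β| ≤ 2 for all 1 ≤ α < β ≤ 4. Then |M_α ∩ M_β| = 2 for every one of the six pairs, and every element of X belongs to exactly two of the four sets. -/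
open Finset

/-!
Double counting gives `∑_{α < β} |M_α ∩ M_β| = ∑_x C(m x, 2)`, where `m x` is the number of sets
containing `x`. Admissibility makes `m x + m (σ x) = 4`, and `C(a, 2) + C(4 - a, 2) ≥ 2` with
equality only at `a = 2`, so pairing `x` with `σ x` bounds the sum below by `|X| = 12`. The
hypothesis bounds it above by `6 · 2 = 12`, so every inequality on the way is an equality.
-/

namespace Nat

theorem two_mul_choose_two_le_choose_two_add {a b n : ℕ} (h : a + b = 2 * n) :
    2 * n.choose 2 ≤ a.choose 2 + b.choose 2 := by
  have h' : (a : ℚ) + b = 2 * n := by exact_mod_cast h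
  have key : (2 * n.choose 2 : ℚ) ≤ a.choose 2 + b.choose 2 := by
    simp only [cast_choose_two]
    nlinarith [sq_nonneg ((a : ℚ) - b)]
  exact_mod_cast key

theorem two_mul_choose_two_lt_choose_two_add {a b n : ℕ} (h : a + b = 2 * n) (ha : a ≠ n) :
    2 * n.choose 2 < a.choose 2 + b.choose 2 := by
  have h' : (a : ℚ) + b = 2 * n := by exact_mod_cast h
  have ha' : (a : ℚ) - b ≠ 0 := by
    intro hab
    exact ha (by exact_mod_cast (by linarith : (a : ℚ) = n))
  have key : (2 * n.choose 2 : ℚ) < a.choose 2 + b.choose 2 := by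
    simp only [cast_choose_two]
    nlinarith [sq_pos_of_ne_zero ha']
  exact_mod_cast key

end Nat

theorem Function.Involutive.sum_add_sum_comp {X : Type*} [Fintype X] {σ : X → X}
    (hσ : Function.Involutive σ) (g : X → ℕ) :
    ∑ x, (g x + g (σ x)) = 2 * ∑ x, g x := by
  rw [sum_add_distrib, hσ.bijective.sum_comp g, two_mul]

theorem card_filter_mem_add_card_filter_mem_of_admissible {ι X : Type*} [Fintype ι]
    [DecidableEq X] {σ : X → X} {M : ι → Finset X}
    (hM : ∀ α, ∀ x : X, x ∈ M α ↔ σ x ∉ M α) (x : X) :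
    #{α | x ∈ M α} + #{α | σ x ∈ M α} = Fintype.card ι := by
  have hσM : ∀ α, σ x ∈ M α ↔ x ∉ M α := fun α => by rw [hM α x, not_not]
  simp only [hσM]
  exact card_filter_add_card_filter_not _

section

variable {ι X : Type*} [Fintype ι] [LinearOrder ι] [Fintype X] [DecidableEq X]

theorem sum_card_inter_eq_sum_choose_two (M : ι → Finset X) :
    ∑ p : ι × ι with p.1 < p.2, #(M p.1 ∩ M p.2) = ∑ x, (#{α | x ∈ M α}).choose 2 := by
  calc ∑ p : ι × ι with p.1 < p.2, #(M p.1 ∩ M p.2)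
      = ∑ p : ι × ι with p.1 < p.2, ∑ x, if x ∈ M p.1 ∧ x ∈ M p.2 then 1 else 0 := by
        refine sum_congr rfl fun p _ => ?_
        rw [← card_filter]
        congr 1
        ext
        simp
    _ = ∑ x, ∑ p : ι × ι with p.1 < p.2, if x ∈ M p.1 ∧ x ∈ M p.2 then 1 else 0 := sum_comm
    _ = ∑ x, (#{α | x ∈ M α}).choose 2 := by
        refine sum_congr rfl fun x _ => ?_
        rw [← card_product_filter_lt, ← card_filter, filter_filter]
        congr 1
        ext
        simp
        tauto

variable {σ : X → X} {M : ι → Finset X} {n : ℕ}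

theorem card_mul_choose_two_le_sum_card_inter (hσ : Function.Involutive σ)
    (hM : ∀ α, ∀ x : X, x ∈ M α ↔ σ x ∉ M α) (hι : Fintype.card ι = 2 * n) :
    Fintype.card X * n.choose 2 ≤ ∑ p : ι × ι with p.1 < p.2, #(M p.1 ∩ M p.2) := by
  have hpair (x : X) :
      2 * n.choose 2 ≤ (#{α | x ∈ M α}).choose 2 + (#{α | σ x ∈ M α}).choose 2 :=
    Nat.two_mul_choose_two_le_choose_two_add
      ((card_filter_mem_add_card_filter_mem_of_admissible hM x).trans hι)
  rw [sum_card_inter_eq_sum_choose_two, ← Nat.mul_le_mul_left_iff two_pos,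
    ← hσ.sum_add_sum_comp (fun x => (#{α | x ∈ M α}).choose 2)]
  calc 2 * (Fintype.card X * n.choose 2) = ∑ _x : X, 2 * n.choose 2 := by
        rw [sum_const, card_univ, smul_eq_mul, mul_left_comm]
    _ ≤ _ := sum_le_sum fun x _ => hpair x

theorem card_filter_mem_eq_of_sum_card_inter_eq (hσ : Function.Involutive σ)
    (hM : ∀ α, ∀ x : X, x ∈ M α ↔ σ x ∉ M α) (hι : Fintype.card ι = 2 * n)
    (h : ∑ p : ι × ι with p.1 < p.2, #(M p.1 ∩ M p.2) = Fintype.card X * n.choose 2) (x : X) :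
    #{α | x ∈ M α} = n := by
  have hsum (y : X) := (card_filter_mem_add_card_filter_mem_of_admissible hM y).trans hι
  by_contra hx
  have hlt : ∑ _y : X, 2 * n.choose 2 <
      ∑ y, ((#{α | y ∈ M α}).choose 2 + (#{α | σ y ∈ M α}).choose 2) :=
    sum_lt_sum (fun y _ => Nat.two_mul_choose_two_le_choose_two_add (hsum y))
      ⟨x, mem_univ x, Nat.two_mul_choose_two_lt_choose_two_add (hsum x) hx⟩
  rw [hσ.sum_add_sum_comp (fun y => (#{α | y ∈ M α}).choose 2),
    ← sum_card_inter_eq_sum_choose_two, h, sum_const, card_univ, smul_eq_mul] at hlt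
  linarith

end

theorem twelve_dim_four_spinors_general {X : Type*} [Fintype X] [DecidableEq X]
    (hX : Fintype.card X = 12)
    (σ : X → X) (hσinv : ∀ x, σ (σ x) = x)
    (M : Fin 4 → Finset X)
    (hM : ∀ α, ∀ x : X, x ∈ M α ↔ σ x ∉ M α)
    (he : ∀ α β : Fin 4, α < β → (M α ∩ M β).card ≤ 2) :
    (∀ α β : Fin 4, α < β → (M α ∩ M β).card = 2) ∧
    (∀ x : X, (univ.filter (fun α : Fin 4 => x ∈ M α)).card = 2) := by
  have hι : Fintype.card (Fin 4) = 2 * 2 := rfl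
  have hlower := card_mul_choose_two_le_sum_card_inter hσinv hM hι
  rw [hX, Nat.choose_self, mul_one] at hlower
  have hle (p : Fin 4 × Fin 4) (hp : p ∈ ({p | p.1 < p.2} : Finset (Fin 4 × Fin 4))) :
      #(M p.1 ∩ M p.2) ≤ 2 :=
    he p.1 p.2 (mem_filter.1 hp).2
  have hpairs : ∑ p : Fin 4 × Fin 4 with p.1 < p.2, 2 = 12 := by decide
  have hequal : ∑ p : Fin 4 × Fin 4 with p.1 < p.2, #(M p.1 ∩ M p.2) = 12 :=
    le_antisymm ((sum_le_sum hle).trans hpairs.le) hlower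
  refine ⟨fun α β hαβ => ?_,
    card_filter_mem_eq_of_sum_card_inter_eq hσinv hM hι (by rw [hequal, hX]; rfl)⟩
  exact (sum_eq_sum_iff_of_le hle).1 (hequal.trans hpairs.symm) (α, β) (by simpa using hαβ)

/-- In dimension twelve (`|X| = 12`, `d = 6`): if four admissible
subsets have pairwise intersections of size at most 2, then every one of the six
pairwise intersections has size exactly 2, and every element of `X` belongs to exactly
two of the four sets. -/
theorem twelve_dim_four_spinors {X : Type*} [Fintype X] [DecidableEq X]
    (hX : Fintype.card X = 12)
    (σ : X → X) (hσinv : ∀ x, σ (σ x) = x) (hσfpf : ∀ x, σ x ≠ x)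
    (M : Fin 4 → Finset X)
    (hM : ∀ α, ∀ x : X, x ∈ M α ↔ σ x ∉ M α)
    (he : ∀ α β : Fin 4, α < β → (M α ∩ M β).card ≤ 2) :
    (∀ α β : Fin 4, α < β → (M α ∩ M β).card = 2) ∧
    (∀ x : X, (univ.filter (fun α : Fin 4 => x ∈ M α)).card = 2) :=
  twelve_dim_four_spinors_general hX σ hσinv M hM he
end
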